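/- arXiv:2409.02052 — 2 statements merged into one kernel-verified Lean document; each statement's English description precedes it below -/
import Mathlib

section
/- Let l be an odd positive integer, r any positive integer, and s ∈ {−1, 1}. Then ∫_{−1}^{1} cos(π l θ)·max(s·cos(π r θ), 0) dθ equals s/2 if l = r, and equals 0 if l ≠ r. -/
/-!
With `c = cos (π r θ)` and `|s| = 1`, `max (s * c) 0 = (s * c + |c|) / 2`. The `s * c` part
contributes `s / 2 · δ_{lr}` by orthogonality of `θ ↦ cos (π n θ)` on `[-1, 1]`. In the `|c|`
part, `|cos (π r θ)|` has period `1` while `cos (π l θ)` changes sign under `θ ↦ θ + 1` because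
`l` is odd; the product is therefore `1`-antiperiodic and integrates to zero over any interval of
length `2`.
-/

open Real Function intervalIntegral
open MeasureTheory (LocallyIntegrable volume)

lemma max_zero_eq_add_abs_div_two {α : Type*} [Field α] [LinearOrder α] [IsStrictOrderedRing α]
    (x : α) : max x 0 = (x + |x|) / 2 := by
  rcases le_total x 0 with h | h
  · rw [max_eq_right h, abs_of_nonpos h]; ring
  · rw [max_eq_left h, abs_of_nonneg h]; ring

theorem Function.Antiperiodic.mul_periodic {α β : Type*} [Add α] [Mul β] [HasDistribNeg β]
    {f g : α → β} {c : α} (hf : Antiperiodic f c) (hg : Periodic g c) :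
    Antiperiodic (f * g) c :=
  fun x => by simp [hf x, hg x]

theorem Function.Antiperiodic.intervalIntegral_add_two_mul_eq_zero {E : Type*}
    [NormedAddCommGroup E] [NormedSpace ℝ E] {f : ℝ → E} {c : ℝ} (hf : Antiperiodic f c)
    (hfi : LocallyIntegrable f) (a : ℝ) : ∫ x in a..a + 2 * c, f x = 0 := by
  have hshift : ∫ x in a + c..a + 2 * c, f x = -∫ x in a..a + c, f x :=
    calc ∫ x in a + c..a + 2 * c, f x = ∫ x in a..a + c, f (x + c) := by
          rw [integral_comp_add_right]; ring_nf
      _ = -∫ x in a..a + c, f x := by simp only [hf _, integral_neg]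
  have hint (x y : ℝ) : IntervalIntegrable f volume x y :=
    (hfi.integrableOn_isCompact isCompact_uIcc).intervalIntegrable
  rw [← integral_add_adjacent_intervals (hint _ _) (hint _ _), hshift, add_neg_cancel]

lemma integral_cos_pi_int_mul (m : ℤ) :
    ∫ θ in (-1 : ℝ)..1, cos (π * m * θ) = if m = 0 then 2 else 0 := by
  split_ifs with hm
  · norm_num [hm]
  · have hc : π * (m : ℝ) ≠ 0 := mul_ne_zero pi_ne_zero (Int.cast_ne_zero.mpr hm)
    rw [integral_comp_mul_left cos hc]
    simp [integral_cos, mul_comm π, sin_int_mul_pi]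

lemma integral_cos_pi_nat_mul_mul_cos (l r : ℕ) (hlr : l + r ≠ 0) :
    ∫ θ in (-1 : ℝ)..1, cos (π * l * θ) * cos (π * r * θ) = if l = r then 1 else 0 := by
  have hprod (θ : ℝ) : cos (π * l * θ) * cos (π * r * θ) =
      (cos (π * ((l - r : ℤ) : ℝ) * θ) + cos (π * ((l + r : ℤ) : ℝ) * θ)) / 2 := by
    rw [eq_div_iff two_ne_zero, mul_comm, ← mul_assoc, two_mul_cos_mul_cos]
    push_cast; ring_nf
  have hint (m : ℤ) : IntervalIntegrable (fun θ : ℝ => cos (π * m * θ)) volume (-1) 1 :=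
    (by fun_prop : Continuous _).intervalIntegrable _ _
  simp_rw [hprod]
  have hsum : (l + r : ℤ) ≠ 0 := by omega
  rw [integral_div, integral_add (hint _) (hint _), integral_cos_pi_int_mul,
    integral_cos_pi_int_mul, if_neg hsum]
  simp only [sub_eq_zero, Nat.cast_inj]
  split_ifs <;> norm_num

lemma antiperiodic_cos_pi_odd_mul {l : ℕ} (hl : Odd l) :
    Antiperiodic (fun θ => cos (π * l * θ)) 1 := fun θ => by
  dsimp only
  rw [mul_add, mul_one, mul_comm π, cos_add_nat_mul_pi, hl.neg_one_pow, neg_one_mul]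

lemma periodic_abs_cos_pi_nat_mul (r : ℕ) : Periodic (fun θ => |cos (π * r * θ)|) 1 :=
  fun θ => by
  dsimp only
  rw [mul_add, mul_one, mul_comm π, cos_add_nat_mul_pi, abs_mul, abs_pow, abs_neg, abs_one,
    one_pow, one_mul]

lemma integral_cos_pi_odd_mul_mul_abs_cos {l : ℕ} (hl : Odd l) (r : ℕ) :
    ∫ θ in (-1 : ℝ)..1, cos (π * l * θ) * |cos (π * r * θ)| = 0 := by
  have h := ((antiperiodic_cos_pi_odd_mul hl).mul_periodic
    (periodic_abs_cos_pi_nat_mul r)).intervalIntegral_add_two_mul_eq_zero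
    (by fun_prop : Continuous _).locallyIntegrable (-1)
  rwa [show (-1 : ℝ) + 2 * 1 = 1 by norm_num] at h

theorem cos_relu_cos_integral_general
    (l r : ℕ) (hl : Odd l)
    (s : ℝ) (hs : s = 1 ∨ s = -1) :
    (∫ θ in (-1 : ℝ)..1, Real.cos (π * l * θ) * max (s * Real.cos (π * r * θ)) 0)
      = if l = r then s / 2 else 0 := by
  have habs : |s| = 1 := by rcases hs with rfl | rfl <;> simp
  have hrelu (θ : ℝ) : cos (π * l * θ) * max (s * cos (π * r * θ)) 0 =
      (s * (cos (π * l * θ) * cos (π * r * θ)) + cos (π * l * θ) * |cos (π * r * θ)|) / 2 := by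
    rw [max_zero_eq_add_abs_div_two, abs_mul, habs, one_mul]; ring
  simp_rw [hrelu]
  rw [integral_div, integral_add ((by fun_prop : Continuous _).intervalIntegrable _ _)
    ((by fun_prop : Continuous _).intervalIntegrable _ _), integral_const_mul,
    integral_cos_pi_nat_mul_mul_cos l r (Nat.add_pos_left hl.pos r).ne',
    integral_cos_pi_odd_mul_mul_abs_cos hl]
  split_ifs <;> ring

/-- Cosine–cosine building block: for odd `l`, any positive `r`, and `s ∈ {−1,1}`,
`∫_{−1}^{1} cos(π l θ) · max(s·cos(π r θ), 0) dθ` equals `s/2` if `l = r` and `0` otherwise. -/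
theorem cos_relu_cos_integral
    (l r : ℕ) (hl : Odd l) (hl0 : 0 < l) (hr0 : 0 < r)
    (s : ℝ) (hs : s = 1 ∨ s = -1) :
    (∫ θ in (-1 : ℝ)..1, Real.cos (π * l * θ) * max (s * Real.cos (π * r * θ)) 0)
      = if l = r then s / 2 else 0 :=
  cos_relu_cos_integral_general l r hl s hs
end

section
/- Let l and r be positive integers and s ∈ {−1, 1}. Then ∫_{−1}^{1} sin(π l θ)·max(s·sin(π r θ), 0) dθ equals s/2 if l = r, and equals 0 if l ≠ r. -/
/-!
For `s = ±1` we have `max (s y) 0 = (s y + |y|) / 2`, which splits the integral in two.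
The `|y|` half has an odd integrand, so it vanishes on `[-1, 1]`; the `s y` half is `s / 2` times
the orthogonality integral of `sin (π l θ)` and `sin (π r θ)`, computed by product-to-sum.
-/

open Real intervalIntegral

theorem intervalIntegral.integral_symm_eq_zero_of_odd {E : Type*} [NormedAddCommGroup E]
    [NormedSpace ℝ E] {f : ℝ → E} (hf : ∀ x, f (-x) = -f x) (a : ℝ) :
    ∫ x in -a..a, f x = 0 := by
  have h := integral_comp_neg (a := -a) (b := a) f
  simp only [hf, integral_neg, neg_neg] at h
  have h2 : (2 : ℝ) • ∫ x in -a..a, f x = 0 := by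
    rw [two_smul]; nth_rw 1 [← h]; exact neg_add_cancel _
  exact (smul_eq_zero.mp h2).resolve_left two_ne_zero

theorem max_mul_zero_eq_of_abs_eq_one {s : ℝ} (hs : |s| = 1) (y : ℝ) :
    max (s * y) 0 = (s * y + |y|) / 2 := by
  have h := add_abs_eq_two_nsmul_posPart (s * y)
  rw [abs_mul, hs, one_mul, two_nsmul, ← two_mul] at h
  rw [h, posPart_def]
  ring_nf

theorem integral_cos_pi_mul_mul {k : ℤ} (hk : k ≠ 0) :
    ∫ θ in (-1 : ℝ)..1, cos (π * k * θ) = 0 := by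
  have hπk : π * k ≠ 0 := mul_ne_zero pi_ne_zero (Int.cast_ne_zero.mpr hk)
  rw [integral_comp_mul_left cos hπk, integral_cos, mul_neg, mul_one, sin_neg, mul_comm,
    sin_int_mul_pi]
  simp

theorem integral_sin_pi_mul_mul_sin_pi_mul (l : ℕ) {r : ℕ} (hr : 0 < r) :
    ∫ θ in (-1 : ℝ)..1, sin (π * l * θ) * sin (π * r * θ) = if l = r then 1 else 0 := by
  have product_to_sum : ∀ θ, sin (π * l * θ) * sin (π * r * θ) =
      (cos (π * ((l - r : ℤ) : ℝ) * θ) - cos (π * ((l + r : ℤ) : ℝ) * θ)) / 2 := fun θ => by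
    rw [eq_div_iff two_ne_zero, mul_comm, ← mul_assoc, two_mul_sin_mul_sin]
    push_cast
    ring_nf
  have hsum : (l + r : ℤ) ≠ 0 := by positivity
  simp_rw [product_to_sum]
  rw [integral_div, integral_sub ((by fun_prop : Continuous _).intervalIntegrable _ _)
    ((by fun_prop : Continuous _).intervalIntegrable _ _), integral_cos_pi_mul_mul hsum]
  split_ifs with h
  · subst h
    norm_num
  · rw [integral_cos_pi_mul_mul (sub_ne_zero.mpr (Int.ofNat_inj.not.mpr h))]
    simp

theorem integral_sin_pi_mul_mul_abs_sin_pi_mul (l r : ℝ) :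
    ∫ θ in (-1 : ℝ)..1, sin (π * l * θ) * |sin (π * r * θ)| = 0 :=
  integral_symm_eq_zero_of_odd (fun θ => by simp only [mul_neg, sin_neg, abs_neg, neg_mul]) 1

theorem sin_relu_sin_integral_general
    (l r : ℕ) (hr0 : 0 < r)
    (s : ℝ) (hs : s = 1 ∨ s = -1) :
    (∫ θ in (-1 : ℝ)..1, Real.sin (π * l * θ) * max (s * Real.sin (π * r * θ)) 0)
      = if l = r then s / 2 else 0 := by
  have habs : |s| = 1 := (abs_eq zero_le_one).mpr hs
  have split : ∀ θ, sin (π * l * θ) * max (s * sin (π * r * θ)) 0 =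
      s / 2 * (sin (π * l * θ) * sin (π * r * θ)) + (sin (π * l * θ) * |sin (π * r * θ)|) / 2 :=
    fun θ => by rw [max_mul_zero_eq_of_abs_eq_one habs]; ring
  simp_rw [split]
  rw [integral_add ((by fun_prop : Continuous _).intervalIntegrable _ _)
    ((by fun_prop : Continuous _).intervalIntegrable _ _), integral_const_mul, integral_div,
    integral_sin_pi_mul_mul_sin_pi_mul l hr0, integral_sin_pi_mul_mul_abs_sin_pi_mul]
  split_ifs <;> simp

/-- Sine–sine building block: for positive integers `l, r` and `s ∈ {−1,1}`,
`∫_{−1}^{1} sin(π l θ) · max(s·sin(π r θ), 0) dθ` equals `s/2` if `l = r` and `0` otherwise. -/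
theorem sin_relu_sin_integral
    (l r : ℕ) (hl0 : 0 < l) (hr0 : 0 < r)
    (s : ℝ) (hs : s = 1 ∨ s = -1) :
    (∫ θ in (-1 : ℝ)..1, Real.sin (π * l * θ) * max (s * Real.sin (π * r * θ)) 0)
      = if l = r then s / 2 else 0 :=
  sin_relu_sin_integral_general l r hr0 s hs
end
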